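/- arXiv:1508.06858 — 3 statements merged into one kernel-verified Lean document; each statement's English description precedes it below -/
import Mathlib

section
/- Let n ≥ 1, let u : ℝⁿ → ℝⁿ be differentiable at a point x, let i ∈ {1,…,n}, and let g : ℝⁿ → ℝ be differentiable at u(x). Define U^i : ℝⁿ → ℝⁿ by letting its j-th component equal the j-th component u_j of u for j ≠ i, and its i-th component equal g ∘ u. Then U^i is differentiable at x and det(DU^i(x)) = (∂g/∂y_i)(u(x)) · det(Du(x)), where ∂g/∂y_i denotes the i-th partial derivative of g. -/
/-!
`Uᵢ = F ∘ u`, where `F y = update y i (g y)` replaces the `i`-th coordinate by `g`. By the chain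
rule `DUᵢ(x) = DF(u x) ∘ Du(x)`, and `DF(u x)` is the identity matrix with its `i`-th row replaced
by the gradient of `g`; subtracting multiples of the other rows leaves only `∂ᵢg` on the diagonal.
-/

open Function

namespace ContinuousLinearMap

variable {R : Type*} [CommRing R]

theorem det_comp {M : Type*} [TopologicalSpace M] [AddCommGroup M] [Module R M]
    (A B : M →L[R] M) : (A ∘L B).det = A.det * B.det :=
  LinearMap.det_comp (A : M →ₗ[R] M) B

variable [TopologicalSpace R] {ι : Type*} [Fintype ι] [DecidableEq ι]

theorem toMatrix_pi_update_proj (i : ι) (φ : (ι → R) →L[R] R) :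
    LinearMap.toMatrix (Pi.basisFun R ι) (Pi.basisFun R ι)
        (pi (update (fun j => proj j) i φ) : (ι → R) →ₗ[R] ι → R) =
      (1 : Matrix ι ι R).updateRow i fun k => φ (Pi.single k 1) := by
  ext j k
  rcases eq_or_ne j i with rfl | hj
  · simp
  · simp [hj, Matrix.one_apply, Pi.single_apply]

theorem det_pi_update_proj (i : ι) (φ : (ι → R) →L[R] R) :
    (pi (update (fun j => proj j) i φ)).det = φ (Pi.single i 1) := by
  have hrow : (fun k => φ (Pi.single k 1)) = ∑ k, φ (Pi.single k 1) • (1 : Matrix ι ι R) k := by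
    ext j
    simp [Matrix.one_apply]
  rw [det, ← LinearMap.det_toMatrix (Pi.basisFun R ι), toMatrix_pi_update_proj, hrow,
    Matrix.det_updateRow_sum, Matrix.det_one, smul_eq_mul, mul_one]

end ContinuousLinearMap

theorem HasFDerivAt.update_self {𝕜 ι : Type*} [NontriviallyNormedField 𝕜] [Fintype ι]
    [DecidableEq ι] {g : (ι → 𝕜) → 𝕜} {φ : (ι → 𝕜) →L[𝕜] 𝕜} {p : ι → 𝕜}
    (hg : HasFDerivAt g φ p) (i : ι) :
    HasFDerivAt (fun y => update y i (g y))
      (ContinuousLinearMap.pi (update (fun j => ContinuousLinearMap.proj j) i φ)) p := by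
  refine hasFDerivAt_pi'.2 fun j => ?_
  rcases eq_or_ne j i with rfl | hj
  · simpa using hg
  · simpa [hj] using hasFDerivAt_apply j p

theorem jacobian_det_row_replacement_general
    (n : ℕ)
    (u : (Fin n → ℝ) → Fin n → ℝ) (x : Fin n → ℝ)
    (hu : DifferentiableAt ℝ u x)
    (i : Fin n) (g : (Fin n → ℝ) → ℝ) (hg : DifferentiableAt ℝ g (u x))
    (Ui : (Fin n → ℝ) → Fin n → ℝ)
    (hUi : ∀ y j, Ui y j = if j = i then g (u y) else u y j) :
    DifferentiableAt ℝ Ui x ∧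
      (fderiv ℝ Ui x).det = fderiv ℝ g (u x) (Pi.single i 1) * (fderiv ℝ u x).det := by
  have hUi_comp : Ui = (fun y => update y i (g y)) ∘ u := by
    funext y j
    simp [hUi, update_apply]
  have hderiv := (hg.hasFDerivAt.update_self i).comp x hu.hasFDerivAt
  rw [← hUi_comp] at hderiv
  refine ⟨hderiv.differentiableAt, ?_⟩
  rw [hderiv.fderiv, ContinuousLinearMap.det_comp, ContinuousLinearMap.det_pi_update_proj]

/-- Row-replacement identity for Jacobian determinants: if `u : ℝⁿ → ℝⁿ`
is differentiable at `x`, `g : ℝⁿ → ℝ` is differentiable at `u x`, and `Uᵢ` is obtained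
from `u` by replacing the `i`-th component with `g ∘ u`, then `Uᵢ` is differentiable at `x`
and `det DUᵢ(x) = ∂ᵢg(u(x)) · det Du(x)`. -/
theorem jacobian_det_row_replacement
    (n : ℕ) (hn : 1 ≤ n)
    (u : (Fin n → ℝ) → Fin n → ℝ) (x : Fin n → ℝ)
    (hu : DifferentiableAt ℝ u x)
    (i : Fin n) (g : (Fin n → ℝ) → ℝ) (hg : DifferentiableAt ℝ g (u x))
    (Ui : (Fin n → ℝ) → Fin n → ℝ)
    (hUi : ∀ y j, Ui y j = if j = i then g (u y) else u y j) :
    DifferentiableAt ℝ Ui x ∧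
      (fderiv ℝ Ui x).det = fderiv ℝ g (u x) (Pi.single i 1) * (fderiv ℝ u x).det :=
  jacobian_det_row_replacement_general n u x hu i g hg Ui hUi
end

section
/- Let n ≥ 1, let u : ℝⁿ → ℝⁿ be differentiable at a point x, let ψ : ℝⁿ → ℝⁿ be differentiable at u(x), and let φ : ℝⁿ → ℝ satisfy div ψ = φ, i.e. Σ_{i=1}^n (∂ψ_i/∂y_i)(y) = φ(y) for all y ∈ ℝⁿ (here it suffices that this holds at y = u(x)). For i = 1,…,n define U^i : ℝⁿ → ℝⁿ by letting its j-th component equal u_j for j ≠ i and its i-th component equal ψ_i ∘ u. Then φ(u(x)) · det(Du(x)) = Σ_{i=1}^n det(DU^i(x)). -/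
/-!
Replacing the `i`-th component of `u` by `ψᵢ ∘ u` replaces the `i`-th row of `Du` by the `i`-th row
of `Dψ · Du`, a combination of the rows of `Du` with coefficients `∂ψᵢ/∂y_k`. Hence
`det DUⁱ = (∂ψᵢ/∂yᵢ) · det Du`, and summing over `i` gives `div ψ · det Du = φ · det Du`.
-/

open Function

theorem Matrix.det_updateRow_mul_self {n R : Type*} [Fintype n] [DecidableEq n] [CommRing R]
    (A B : Matrix n n R) (i : n) : (B.updateRow i ((A * B) i)).det = A i i * B.det := by
  have hrow : (A * B) i = ∑ k, A i k • B k := by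
    ext j
    simp [Matrix.mul_apply, Finset.sum_apply]
  rw [hrow, Matrix.det_updateRow_sum, smul_eq_mul]

theorem LinearMap.det_eq_apply_single_mul_det {ι R : Type*} [Fintype ι] [DecidableEq ι]
    [CommRing R] {L D A : (ι → R) →ₗ[R] ι → R} {i : ι}
    (hL : ∀ v, L v = update (D v) i (A (D v) i)) : L.det = A (Pi.single i 1) i * D.det := by
  have hmat : toMatrix' L = (toMatrix' D).updateRow i ((toMatrix' A * toMatrix' D) i) := by
    ext j k
    rw [← toMatrix'_comp]
    rcases eq_or_ne j i with rfl | hj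
    · simp [hL]
    · simp [hL, hj]
  rw [← det_toMatrix', hmat, Matrix.det_updateRow_mul_self, det_toMatrix', toMatrix'_apply]

theorem fderiv_update_comp_apply {𝕜 E F ι : Type*} [NontriviallyNormedField 𝕜]
    [NormedAddCommGroup E] [NormedSpace 𝕜 E] [NormedAddCommGroup F] [NormedSpace 𝕜 F]
    [Fintype ι] [DecidableEq ι] {u : E → ι → F} {ψ : (ι → F) → ι → F} {x : E}
    (hu : DifferentiableAt 𝕜 u x) (hψ : DifferentiableAt 𝕜 ψ (u x)) (i : ι) (v : E) :
    fderiv 𝕜 (fun y => update (u y) i (ψ (u y) i)) x v =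
      update (fderiv 𝕜 u x v) i (fderiv 𝕜 ψ (u x) (fderiv 𝕜 u x v) i) := by
  have hψu : DifferentiableAt 𝕜 (fun y => ψ (u y)) x := hψ.comp x hu
  have hdiff : DifferentiableAt 𝕜 (fun y => update (u y) i (ψ (u y) i)) x := by
    rw [differentiableAt_pi]
    intro j
    rcases eq_or_ne j i with rfl | hj
    · simpa using differentiableAt_pi.1 hψu j
    · simpa [hj] using differentiableAt_pi.1 hu j
  ext j
  rw [← ContinuousLinearMap.proj_apply (R := 𝕜) j (fderiv 𝕜 _ x v),
    ← ContinuousLinearMap.comp_apply, ← fderiv_apply hdiff]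
  rcases eq_or_ne j i with rfl | hj
  · simp [fderiv_apply hψu, fderiv_fun_comp x hψ hu]
  · simp [hj, fderiv_apply hu]

theorem sum_jacobian_det_eq_comp_mul_det_general
    (n : ℕ)
    (u : (Fin n → ℝ) → Fin n → ℝ) (x : Fin n → ℝ)
    (hu : DifferentiableAt ℝ u x)
    (ψ : (Fin n → ℝ) → Fin n → ℝ) (hψ : DifferentiableAt ℝ ψ (u x))
    (φ : (Fin n → ℝ) → ℝ)
    (hdiv : ∑ i : Fin n, fderiv ℝ ψ (u x) (Pi.single i 1) i = φ (u x))
    (U : Fin n → (Fin n → ℝ) → Fin n → ℝ)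
    (hU : ∀ i y j, U i y j = if j = i then ψ (u y) i else u y j) :
    φ (u x) * (fderiv ℝ u x).det = ∑ i : Fin n, (fderiv ℝ (U i) x).det := by
  have hU_eq : ∀ i, U i = fun y => update (u y) i (ψ (u y) i) := fun i => by
    ext y j
    rw [hU, update_apply]
  have hdet : ∀ i, (fderiv ℝ (U i) x).det =
      fderiv ℝ ψ (u x) (Pi.single i 1) i * (fderiv ℝ u x).det := fun i => by
    rw [hU_eq i]
    exact LinearMap.det_eq_apply_single_mul_det (fderiv_update_comp_apply hu hψ i)
  rw [Finset.sum_congr rfl fun i _ => hdet i, ← Finset.sum_mul, hdiv]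

/-- The key algebraic identity (9) of the paper: if `div ψ = φ` (at the
point `u x`), and `Uⁱ` is obtained from `u` by replacing the `i`-th component with
`ψᵢ ∘ u`, then `φ(u(x)) · det Du(x) = ∑ᵢ det DUⁱ(x)`. -/
theorem sum_jacobian_det_eq_comp_mul_det
    (n : ℕ) (hn : 1 ≤ n)
    (u : (Fin n → ℝ) → Fin n → ℝ) (x : Fin n → ℝ)
    (hu : DifferentiableAt ℝ u x)
    (ψ : (Fin n → ℝ) → Fin n → ℝ) (hψ : DifferentiableAt ℝ ψ (u x))
    (φ : (Fin n → ℝ) → ℝ)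
    (hdiv : ∑ i : Fin n, fderiv ℝ ψ (u x) (Pi.single i 1) i = φ (u x))
    (U : Fin n → (Fin n → ℝ) → Fin n → ℝ)
    (hU : ∀ i y j, U i y j = if j = i then ψ (u y) i else u y j) :
    φ (u x) * (fderiv ℝ u x).det = ∑ i : Fin n, (fderiv ℝ (U i) x).det :=
  sum_jacobian_det_eq_comp_mul_det_general n u x hu ψ hψ φ hdiv U hU
end

section
/- Let 1 < d̄ < 2 and 0 < α < 1. Set L = {(x,0) ∈ ℝ² : 0 ≤ x ≤ 1} and D = {(x,y) ∈ ℝ² : 0 < x < 1, 0 < y < min(x, 1−x)}. Then there exist r ∈ (0,1), an integer N ≥ 1, and maps S_1, …, S_N : ℝ² → ℝ², each a similarity of ratio r (i.e. ‖S_i(a) − S_i(b)‖ = r‖a − b‖ for all a, b ∈ ℝ²; equivalently the one-dimensional Hausdorff measure of S_i(L) equals r), such that: (ii) there exists a continuous curve γ : [0,1] → ℝ² with γ(0) = (0,0), γ(1) = (1,0), and range of γ equal to the union ⋃_{i=1}^N S_i(L); (iii) N·r^{d̄} = 1; (iv) S_i(D) ⊆ D for all i, S_i(D) ∩ S_j(D)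 = ∅ whenever i ≠ j, and the closures of S_i(D) and S_j(D) are disjoint whenever |i − j| > 1; (v) r < 1/2 and 2·r^{1−α} ≤ 1. -/
open MeasureTheory

/-- The horizontal unit segment `L = [0,1] × {0} ⊆ ℝ²`. -/
def segL : Set (EuclideanSpace ℝ (Fin 2)) :=
  {q | q 0 ∈ Set.Icc (0:ℝ) 1 ∧ q 1 = 0}

/-- The open triangle `D = {(x,y) : 0 < x < 1, 0 < y < min(x, 1-x)}`. -/
def triD : Set (EuclideanSpace ℝ (Fin 2)) :=
  {q | 0 < q 0 ∧ q 0 < 1 ∧ 0 < q 1 ∧ q 1 < min (q 0) (1 - q 0)}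

/-!
Identify `ℝ²` with `ℂ`. A polygon `0 = P₀, P₁, …, P_N = 1` with all sides of length `r` yields the
similarities `Sₙ z = Pₙ + (Pₙ₊₁ - Pₙ) z`, whose images of `L` make up the polygon. We take a comb:
`K + 1` horizontal sides, then `K` times a tooth (`K` sides `δ + h i` up, `K` sides `δ - h i` down)
followed by a horizontal side, and finally `K` horizontal sides; so `N = (K + 1)(2K + 1)`,
`δ² + h² = r²` and `(3K + 1) r + 2K² δ = 1`. With `r = N^(-1/d̄)` and `1/2 < 1/d̄ < 1` we get
`K r → 0` and `K² r → ∞`, so for large `K` the offset `δ` is positive and at most `r / 2`, and the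
teeth, of height `K h < K r`, fit inside `D`.

Each `Sₙ(D)` is the open right isosceles triangle erected on the left of `[Pₙ, Pₙ₊₁]`; it lies
strictly on one side of any line having its three vertices weakly on that side. Two of them are
separated by a line `x + y = c` if the first one sits on a horizontal side, by `x - y = c` if the
second one does, by a vertical line if they belong to different teeth, and by a horizontal or a
vertical line within a tooth.
-/

open Complex Set AffineMap Filter Topology

noncomputable section

/-! ### Triangles erected on segments of `ℂ` -/

def stdTriangle : Set ℂ := {z | 0 < z.im ∧ z.im < z.re ∧ z.re + z.im < 1}

def apex (p q : ℂ) : ℂ := lineMap p q ((1 + I) / 2)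

def triangleOn (p q : ℂ) : Set ℂ := lineMap p q '' stdTriangle

@[simp] lemma apex_re (p q : ℂ) : (apex p q).re = p.re + ((q - p).re - (q - p).im) / 2 := by
  rw [apex, lineMap_apply_ring']
  simp only [add_re, mul_re, div_ofNat_re, div_ofNat_im, add_im, one_re, one_im, I_re, I_im]
  ring

@[simp] lemma apex_im (p q : ℂ) : (apex p q).im = p.im + ((q - p).re + (q - p).im) / 2 := by
  rw [apex, lineMap_apply_ring']
  simp only [add_re, mul_im, div_ofNat_re, div_ofNat_im, add_im, one_re, one_im, I_re, I_im]
  ring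

lemma apex_re_add_im (p q : ℂ) : (apex p q).re + (apex p q).im = q.re + p.im := by
  rw [apex_re, apex_im, sub_re, sub_im]; ring

lemma apex_re_sub_im (p q : ℂ) : (apex p q).re - (apex p q).im = p.re - q.im := by
  rw [apex_re, apex_im, sub_re, sub_im]; ring

theorem isOpen_stdTriangle : IsOpen stdTriangle :=
  (isOpen_lt continuous_const continuous_im).inter <|
    (isOpen_lt continuous_im continuous_re).inter <|
      isOpen_lt (continuous_re.add continuous_im) continuous_const

theorem isOpen_triangleOn {p q : ℂ} (h : p ≠ q) : IsOpen (triangleOn p q) := by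
  have : (lineMap p q : ℂ → ℂ) = (Homeomorph.mulRight₀ (q - p) (sub_ne_zero.2 h.symm)).trans
      (Homeomorph.addRight p) := by
    ext1 z; simp [lineMap_apply]
  rw [triangleOn, this]
  exact Homeomorph.isOpenMap _ _ isOpen_stdTriangle

theorem lineMap_eq_smul_add_smul_add_smul (p q z : ℂ) : lineMap p q z =
    (1 - z.re - z.im) • p + (z.re - z.im) • q + (2 * z.im) • apex p q := by
  rw [apex, lineMap_apply_ring', lineMap_apply_ring']
  conv_lhs => rw [← re_add_im z]
  simp only [real_smul, ofReal_sub, ofReal_one, ofReal_mul, ofReal_ofNat]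
  ring

theorem closure_triangleOn_subset {ℓ : ℂ →L[ℝ] ℝ} {p q : ℂ} {c : ℝ}
    (hv : ∀ v ∈ ({p, q, apex p q} : Set ℂ), ℓ v ≤ c) :
    closure (triangleOn p q) ⊆ {z | ℓ z ≤ c} := by
  simp only [mem_insert_iff, mem_singleton_iff, forall_eq_or_imp, forall_eq] at hv
  obtain ⟨hp, hq, ha⟩ := hv
  refine closure_minimal ?_ (isClosed_le ℓ.continuous continuous_const)
  rintro _ ⟨z, ⟨h0, h1, h2⟩, rfl⟩
  simp only [mem_ofPred_eq, lineMap_eq_smul_add_smul_add_smul, map_add, map_smul, smul_eq_mul]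
  nlinarith [mul_le_mul_of_nonneg_left hp (by linarith : 0 ≤ 1 - z.re - z.im),
    mul_le_mul_of_nonneg_left hq (by linarith : 0 ≤ z.re - z.im),
    mul_le_mul_of_nonneg_left ha (by linarith : 0 ≤ 2 * z.im)]

theorem triangleOn_subset {ℓ : ℂ →L[ℝ] ℝ} (hℓ : ℓ ≠ 0) {p q : ℂ} (hpq : p ≠ q) {c : ℝ}
    (hv : ∀ v ∈ ({p, q, apex p q} : Set ℂ), ℓ v ≤ c) :
    triangleOn p q ⊆ {z | ℓ z < c} := by
  have hle : ℓ '' triangleOn p q ⊆ Iic c :=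
    image_subset_iff.2 (subset_closure.trans (closure_triangleOn_subset hv))
  have := interior_maximal hle (ℓ.isOpenMap_of_ne_zero hℓ _ (isOpen_triangleOn hpq))
  rw [interior_Iic] at this
  exact image_subset_iff.1 this

theorem disjoint_triangleOn {ℓ : ℂ →L[ℝ] ℝ} (hℓ : ℓ ≠ 0) {p q p' q' : ℂ} (hpq : p ≠ q)
    (hpq' : p' ≠ q') {c : ℝ} (h : ∀ v ∈ ({p, q, apex p q} : Set ℂ), ℓ v ≤ c)
    (h' : ∀ v ∈ ({p', q', apex p' q'} : Set ℂ), c ≤ ℓ v) :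
    Disjoint (triangleOn p q) (triangleOn p' q') := by
  have h₁ := triangleOn_subset hℓ hpq h
  have h₂ := triangleOn_subset (neg_ne_zero.2 hℓ) hpq' (c := -c) (by simpa using h')
  refine Set.disjoint_left.2 fun z hz hz' => ?_
  have := h₁ hz
  have := h₂ hz'
  simp only [mem_ofPred_eq, neg_apply] at *
  linarith

theorem disjoint_closure_triangleOn {ℓ : ℂ →L[ℝ] ℝ} {p q p' q' : ℂ} {c c' : ℝ} (hc : c < c')
    (h : ∀ v ∈ ({p, q, apex p q} : Set ℂ), ℓ v ≤ c)
    (h' : ∀ v ∈ ({p', q', apex p' q'} : Set ℂ), c' ≤ ℓ v) :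
    Disjoint (closure (triangleOn p q)) (closure (triangleOn p' q')) := by
  have h₁ := closure_triangleOn_subset h
  have h₂ := closure_triangleOn_subset (ℓ := -ℓ) (c := -c') (by simpa using h')
  refine Set.disjoint_left.2 fun z hz hz' => ?_
  have := h₁ hz
  have := h₂ hz'
  simp only [mem_ofPred_eq, neg_apply] at *
  linarith

theorem triangleOn_subset_stdTriangle {p q : ℂ} (hpq : p ≠ q)
    (h : ∀ v ∈ ({p, q, apex p q} : Set ℂ), 0 ≤ v.im ∧ v.im ≤ v.re ∧ v.re + v.im ≤ 1) :
    triangleOn p q ⊆ stdTriangle := by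
  have h₁ := triangleOn_subset (ℓ := -imCLM) (DFunLike.ne_iff.2 ⟨I, by simp⟩) hpq (c := 0)
    fun v hv => by simpa using (h v hv).1
  have h₂ := triangleOn_subset (ℓ := imCLM - reCLM) (DFunLike.ne_iff.2 ⟨I, by simp⟩) hpq (c := 0)
    fun v hv => by simpa using (h v hv).2.1
  have h₃ := triangleOn_subset (ℓ := reCLM + imCLM) (DFunLike.ne_iff.2 ⟨1, by simp⟩) hpq (c := 1)
    fun v hv => by simpa using (h v hv).2.2
  intro z hz
  have := h₁ hz
  have := h₂ hz
  have := h₃ hz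
  simp only [mem_ofPred_eq, neg_apply, sub_apply, add_apply, reCLM_apply, imCLM_apply] at *
  exact ⟨by linarith, by linarith, by linarith⟩

/-! ### From `ℂ` to the Euclidean plane -/

abbrev toPlane : ℂ ≃ₗᵢ[ℝ] EuclideanSpace ℝ (Fin 2) := Complex.orthonormalBasisOneI.repr

@[simp] lemma toPlane_apply_zero (z : ℂ) : toPlane z 0 = z.re := rfl

@[simp] lemma toPlane_apply_one (z : ℂ) : toPlane z 1 = z.im := rfl

def planeSim (p q : ℂ) (x : EuclideanSpace ℝ (Fin 2)) : EuclideanSpace ℝ (Fin 2) :=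
  toPlane (lineMap p q (toPlane.symm x))

theorem planeSim_image (p q : ℂ) (s : Set (EuclideanSpace ℝ (Fin 2))) :
    planeSim p q '' s = toPlane '' (lineMap p q '' (toPlane ⁻¹' s)) := by
  rw [← toPlane.symm_symm, ← LinearIsometryEquiv.image_eq_preimage_symm, toPlane.symm_symm,
    image_image, image_image]
  rfl

theorem norm_planeSim_sub (p q : ℂ) (a b : EuclideanSpace ℝ (Fin 2)) :
    ‖planeSim p q a - planeSim p q b‖ = ‖q - p‖ * ‖a - b‖ := by
  rw [planeSim, planeSim, ← dist_eq_norm, LinearIsometryEquiv.dist_map, dist_lineMap_lineMap,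
    LinearIsometryEquiv.dist_map, dist_eq_norm, dist_eq_norm', mul_comm]

theorem toPlane_preimage_segL : toPlane ⁻¹' segL = segment ℝ 0 1 := by
  ext z
  rw [segment_eq_image_lineMap]
  simp [segL, Complex.ext_iff, lineMap_apply, eq_comm]

theorem toPlane_preimage_triD : toPlane ⁻¹' triD = stdTriangle := by
  ext z
  simp only [triD, stdTriangle, mem_preimage, mem_ofPred_eq, toPlane_apply_zero, toPlane_apply_one,
    lt_min_iff]
  constructor
  · rintro ⟨-, -, h1, h2, h3⟩; exact ⟨h1, h2, by linarith⟩
  · rintro ⟨h1, h2, h3⟩; exact ⟨by linarith, by linarith, h1, h2, by linarith⟩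

theorem toPlane_one : toPlane 1 = (WithLp.equiv 2 (Fin 2 → ℝ)).symm ![1, 0] := by
  ext i; fin_cases i <;> simp

theorem planeSim_image_segL (p q : ℂ) : planeSim p q '' segL = toPlane '' segment ℝ p q := by
  rw [planeSim_image, toPlane_preimage_segL, segment_eq_image_lineMap,
    image_image (lineMap p q : ℂ → ℂ), segment_eq_image_lineMap]
  refine congrArg _ (image_congr fun t _ => ?_)
  simp [lineMap_apply]

theorem hausdorffMeasure_planeSim_image_segL (p q : ℂ) :
    μH[1] (planeSim p q '' segL) = ENNReal.ofReal ‖q - p‖ := by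
  rw [planeSim_image_segL, toPlane.isometry.hausdorffMeasure_image (Or.inl zero_le_one),
    hausdorffMeasure_segment, edist_dist, dist_eq_norm']

theorem planeSim_image_triD (p q : ℂ) : planeSim p q '' triD = toPlane '' triangleOn p q := by
  rw [planeSim_image, toPlane_preimage_triD, triangleOn]

/-! ### Polygonal paths -/

section

variable {E : Type*} [AddCommGroup E] [Module ℝ E] [TopologicalSpace E] [IsTopologicalAddGroup E]
  [ContinuousSMul ℝ E]

def polygonalPath (P : ℕ → E) : (n : ℕ) → Path (P 0) (P n)
  | 0 => Path.refl (P 0)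
  | n + 1 => (polygonalPath P n).trans (Path.segment (P n) (P (n + 1)))

theorem range_polygonalPath (P : ℕ → E) (n : ℕ) :
    range (polygonalPath P (n + 1)) = ⋃ k < n + 1, segment ℝ (P k) (P (k + 1)) := by
  induction n with
  | zero => simpa [polygonalPath, Path.trans_range] using left_mem_segment ℝ (P 0) (P 1)
  | succ n ih =>
    rw [polygonalPath, Path.trans_range, ih, Path.range_segment, biUnion_lt_succ _ (n + 1)]

end

theorem exists_curve_image_eq_iUnion_planeSim (P : ℕ → ℂ) {n : ℕ} (hn : 0 < n) :
    ∃ γ : ℝ → EuclideanSpace ℝ (Fin 2), Continuous γ ∧ γ 0 = toPlane (P 0) ∧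
      γ 1 = toPlane (P n) ∧ γ '' Icc 0 1 = ⋃ i : Fin n, planeSim (P i) (P (i + 1)) '' segL := by
  obtain ⟨k, rfl⟩ := Nat.exists_eq_add_one_of_ne_zero hn.ne'
  refine ⟨toPlane ∘ (polygonalPath P (k + 1)).extend,
    toPlane.continuous.comp (Path.continuous_extend _), by simp, by simp, ?_⟩
  rw [image_comp, Path.image_extend_of_subset _ subset_rfl, range_polygonalPath, image_iUnion₂]
  ext x
  simp only [mem_iUnion, planeSim_image_segL]
  exact ⟨fun ⟨i, hi, hx⟩ => ⟨⟨i, hi⟩, hx⟩, fun ⟨i, hx⟩ => ⟨i, i.2, hx⟩⟩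

/-! ### The comb -/

structure CombParams where
  K : ℕ
  r : ℝ
  δ : ℝ
  h : ℝ
  one_le_K : 1 ≤ K
  δ_pos : 0 < δ
  two_mul_δ_le : 2 * δ ≤ r
  h_nonneg : 0 ≤ h
  δ_sq_add_h_sq : δ ^ 2 + h ^ 2 = r ^ 2
  width_eq : (3 * K + 1) * r + 2 * K ^ 2 * δ = 1

namespace CombParams

variable (C : CombParams)

def N : ℕ := (C.K + 1) * (2 * C.K + 1)

def toothStart (t : ℕ) : ℝ := (C.K + 1 + t) * C.r + 2 * C.K * t * C.δ

def toothVertex (t j : ℕ) : ℂ := ⟨C.toothStart t + j * C.δ, min (j : ℝ) (2 * C.K - j) * C.h⟩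

/-- Writing `n = K + 1 + (2K + 1) t + j` with `j ≤ 2K`, the vertex `n` is the `j`-th vertex of
tooth `t` for `t < K`, and lies on the final horizontal run for `t = K`. -/
def vertex (n : ℕ) : ℂ :=
  if n < C.K + 1 then ⟨n * C.r, 0⟩
  else if (n - (C.K + 1)) / (2 * C.K + 1) < C.K then
    C.toothVertex ((n - (C.K + 1)) / (2 * C.K + 1)) ((n - (C.K + 1)) % (2 * C.K + 1))
  else ⟨C.toothStart C.K + ((n - (C.K + 1)) % (2 * C.K + 1) : ℕ) * C.r, 0⟩

lemma r_pos : 0 < C.r := by linarith [C.δ_pos, C.two_mul_δ_le]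

lemma h_lt_r : C.h < C.r := by
  nlinarith [C.δ_pos, C.r_pos, C.h_nonneg, C.δ_sq_add_h_sq]

lemma δ_le_h : C.δ ≤ C.h := by
  nlinarith [C.δ_pos, C.r_pos, C.h_nonneg, C.δ_sq_add_h_sq, C.two_mul_δ_le]

lemma h_pos : 0 < C.h := C.δ_pos.trans_le C.δ_le_h

lemma r_lt_half : C.r < 1 / 2 := by
  have hK : (1 : ℝ) ≤ C.K := by exact_mod_cast C.one_le_K
  nlinarith [C.width_eq, C.r_pos, C.δ_pos]

lemma N_pos : 0 < C.N := Nat.mul_pos (Nat.succ_pos _) (Nat.succ_pos _)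

lemma N_eq : C.N = C.K + 1 + (2 * C.K + 1) * C.K + C.K := by simp only [N]; ring

lemma toothStart_zero : C.toothStart 0 = (C.K + 1) * C.r := by simp [toothStart]

lemma toothStart_succ (t : ℕ) : C.toothStart (t + 1) = C.toothStart t + 2 * C.K * C.δ + C.r := by
  simp only [toothStart]; push_cast; ring

lemma toothStart_mono {t t' : ℕ} (h : t ≤ t') : C.toothStart t ≤ C.toothStart t' := by
  have := C.r_pos
  have := C.δ_pos
  simp only [toothStart]
  gcongr

lemma toothStart_K_add : C.toothStart C.K + C.K * C.r = 1 := by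
  simp only [toothStart]; linear_combination C.width_eq

lemma toothVertex_of_le {t j : ℕ} (hj : j ≤ C.K) :
    C.toothVertex t j = ⟨C.toothStart t + j * C.δ, j * C.h⟩ := by
  have : (j : ℝ) ≤ C.K := by exact_mod_cast hj
  rw [toothVertex, min_eq_left (by linarith)]

lemma toothVertex_of_ge {t j : ℕ} (hj : C.K ≤ j) :
    C.toothVertex t j = ⟨C.toothStart t + j * C.δ, (2 * C.K - j) * C.h⟩ := by
  have : (C.K : ℝ) ≤ j := by exact_mod_cast hj
  rw [toothVertex, min_eq_right (by linarith)]

lemma vertex_of_lt {n : ℕ} (hn : n < C.K + 1) : C.vertex n = ⟨n * C.r, 0⟩ := by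
  simp [vertex, hn]

lemma vertex_period {t j : ℕ} (hj : j < 2 * C.K + 1) :
    C.vertex (C.K + 1 + (2 * C.K + 1) * t + j) =
      if t < C.K then C.toothVertex t j else ⟨C.toothStart C.K + j * C.r, 0⟩ := by
  have hu : C.K + 1 + (2 * C.K + 1) * t + j - (C.K + 1) = (2 * C.K + 1) * t + j := by omega
  have hdiv : ((2 * C.K + 1) * t + j) / (2 * C.K + 1) = t := by
    rw [Nat.mul_add_div (by omega), Nat.div_eq_of_lt hj, add_zero]
  have hmod : ((2 * C.K + 1) * t + j) % (2 * C.K + 1) = j := by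
    rw [Nat.mul_add_mod, Nat.mod_eq_of_lt hj]
  simp only [vertex, if_neg (by omega : ¬ C.K + 1 + (2 * C.K + 1) * t + j < C.K + 1), hu, hdiv,
    hmod]

lemma vertex_zero : C.vertex 0 = 0 := by
  rw [C.vertex_of_lt (Nat.succ_pos _)]; simp [Complex.ext_iff]

lemma vertex_N : C.vertex C.N = 1 := by
  rw [N_eq, C.vertex_period (by omega), if_neg (lt_irrefl _), C.toothStart_K_add]
  simp [Complex.ext_iff]

def IsFlat (n : ℕ) (a : ℝ) : Prop :=
  C.vertex n = ⟨a, 0⟩ ∧ C.vertex (n + 1) = ⟨a + C.r, 0⟩ ∧ 0 ≤ a ∧ a + C.r ≤ 1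

def IsSlanted (n t j : ℕ) : Prop :=
  t < C.K ∧ j < 2 * C.K ∧ n = C.K + 1 + (2 * C.K + 1) * t + j

lemma isFlat_of_lt {n : ℕ} (hn : n < C.K + 1) : C.IsFlat n (n * C.r) := by
  have := C.r_pos
  have hX := C.toothStart_mono (Nat.zero_le C.K)
  have hn' : (n : ℝ) + 1 ≤ C.K + 1 := by exact_mod_cast hn
  rw [C.toothStart_zero] at hX
  refine ⟨C.vertex_of_lt hn, ?_, by positivity, by nlinarith [C.toothStart_K_add]⟩
  rcases Nat.lt_or_ge (n + 1) (C.K + 1) with h | h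
  · rw [C.vertex_of_lt h]; push_cast; ring_nf
  · obtain rfl : n = C.K := by omega
    rw [show C.K + 1 = C.K + 1 + (2 * C.K + 1) * 0 + 0 by ring, C.vertex_period (by omega),
      if_pos (show 0 < C.K from C.one_le_K), C.toothVertex_of_le (Nat.zero_le _), C.toothStart_zero]
    simp only [Nat.cast_zero, zero_mul, add_zero, add_mul, one_mul]

lemma isFlat_of_tooth_end {t : ℕ} (ht : t < C.K) :
    C.IsFlat (C.K + 1 + (2 * C.K + 1) * t + 2 * C.K) (C.toothStart t + 2 * C.K * C.δ) := by
  have hX := C.toothStart_mono (Nat.zero_le t)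
  have hX' := C.toothStart_mono (Nat.succ_le_of_lt ht)
  have := C.r_pos
  have : 0 ≤ 2 * (C.K : ℝ) * C.δ := by have := C.δ_pos; positivity
  rw [C.toothStart_zero] at hX
  rw [C.toothStart_succ] at hX'
  refine ⟨?_, ?_, by nlinarith, by nlinarith [C.toothStart_K_add]⟩
  · rw [C.vertex_period (by omega), if_pos ht, C.toothVertex_of_ge (by omega)]
    push_cast; ring_nf
  · rw [show C.K + 1 + (2 * C.K + 1) * t + 2 * C.K + 1 = C.K + 1 + (2 * C.K + 1) * (t + 1) + 0
      by ring, C.vertex_period (by omega)]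
    split_ifs with h
    · rw [C.toothVertex_of_le (Nat.zero_le _), C.toothStart_succ]; push_cast; ring_nf
    · rw [congrArg C.toothStart (by omega : C.K = t + 1), C.toothStart_succ]; push_cast; ring_nf

lemma isFlat_of_tail {j : ℕ} (hj : j < C.K) :
    C.IsFlat (C.K + 1 + (2 * C.K + 1) * C.K + j) (C.toothStart C.K + j * C.r) := by
  have hX := C.toothStart_mono (Nat.zero_le C.K)
  have hj' : (j : ℝ) + 1 ≤ C.K := by exact_mod_cast hj
  have := C.r_pos
  have : 0 ≤ (j : ℝ) * C.r := by positivity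
  rw [C.toothStart_zero] at hX
  refine ⟨?_, ?_, by nlinarith, by nlinarith [C.toothStart_K_add]⟩
  · rw [C.vertex_period (by omega), if_neg (lt_irrefl _)]
  · rw [add_assoc, C.vertex_period (by omega), if_neg (lt_irrefl _)]; push_cast; ring_nf

theorem flat_or_slanted {n : ℕ} (hn : n < C.N) :
    (∃ a, C.IsFlat n a) ∨ ∃ t j, C.IsSlanted n t j := by
  by_cases h0 : n < C.K + 1
  · exact Or.inl ⟨_, C.isFlat_of_lt h0⟩
  obtain ⟨t, j, hj, rfl⟩ : ∃ t j, j < 2 * C.K + 1 ∧ n = C.K + 1 + (2 * C.K + 1) * t + j :=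
    ⟨(n - (C.K + 1)) / (2 * C.K + 1), (n - (C.K + 1)) % (2 * C.K + 1), Nat.mod_lt _ (by omega),
      by have := Nat.div_add_mod (n - (C.K + 1)) (2 * C.K + 1); omega⟩
  rw [N_eq] at hn
  rcases lt_trichotomy t C.K with ht | rfl | ht
  · rcases Nat.lt_or_ge j (2 * C.K) with hj' | hj'
    · exact Or.inr ⟨t, j, ht, hj', rfl⟩
    · obtain rfl : j = 2 * C.K := by omega
      exact Or.inl ⟨_, C.isFlat_of_tooth_end ht⟩
  · exact Or.inl ⟨_, C.isFlat_of_tail (by omega)⟩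
  · have := Nat.mul_le_mul_left (2 * C.K + 1) (Nat.succ_le_of_lt ht)
    rw [Nat.mul_succ] at this
    omega

def verts (n : ℕ) : Set ℂ := {C.vertex n, C.vertex (n + 1), apex (C.vertex n) (C.vertex (n + 1))}

lemma forall_mem_verts {n : ℕ} {p : ℂ → Prop} : (∀ v ∈ C.verts n, p v) ↔
    p (C.vertex n) ∧ p (C.vertex (n + 1)) ∧ p (apex (C.vertex n) (C.vertex (n + 1))) := by
  simp only [verts, mem_insert_iff, mem_singleton_iff, forall_eq_or_imp, forall_eq]

section

variable {C}

lemma IsSlanted.vertex_eq {n t j : ℕ} (hs : C.IsSlanted n t j) :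
    C.vertex n = C.toothVertex t j ∧ C.vertex (n + 1) = C.toothVertex t (j + 1) := by
  obtain ⟨ht, hj, rfl⟩ := hs
  exact ⟨by rw [C.vertex_period (by omega), if_pos ht],
    by rw [add_assoc, C.vertex_period (by omega), if_pos ht]⟩

lemma IsSlanted.vertex_eq_of_lt {n t j : ℕ} (hs : C.IsSlanted n t j) (hj : j < C.K) :
    C.vertex n = ⟨C.toothStart t + j * C.δ, j * C.h⟩ ∧
      C.vertex (n + 1) = ⟨C.toothStart t + (j + 1) * C.δ, (j + 1) * C.h⟩ := by
  rw [hs.vertex_eq.1, hs.vertex_eq.2, C.toothVertex_of_le hj.le, C.toothVertex_of_le hj]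
  push_cast; exact ⟨rfl, rfl⟩

lemma IsSlanted.vertex_eq_of_ge {n t j : ℕ} (hs : C.IsSlanted n t j) (hj : C.K ≤ j) :
    C.vertex n = ⟨C.toothStart t + j * C.δ, (2 * C.K - j) * C.h⟩ ∧
      C.vertex (n + 1) = ⟨C.toothStart t + (j + 1) * C.δ, (2 * C.K - (j + 1)) * C.h⟩ := by
  rw [hs.vertex_eq.1, hs.vertex_eq.2, C.toothVertex_of_ge hj, C.toothVertex_of_ge (by omega)]
  push_cast; exact ⟨rfl, rfl⟩

lemma IsSlanted.tooth_le {n m t t' j j' : ℕ} (hs : C.IsSlanted n t j) (hs' : C.IsSlanted m t' j')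
    (hnm : n < m) : t ≤ t' := by
  obtain ⟨-, hj, rfl⟩ := hs
  obtain ⟨-, hj', rfl⟩ := hs'
  by_contra! h
  have := Nat.mul_le_mul_left (2 * C.K + 1) (Nat.succ_le_of_lt h)
  rw [Nat.mul_succ] at this
  omega

lemma IsFlat.verts_bounds {n : ℕ} {a : ℝ} (ha : C.IsFlat n a) :
    ∀ v ∈ C.verts n, 0 ≤ v.im ∧ a ≤ v.re - v.im ∧ v.re + v.im ≤ a + C.r := by
  have := C.r_pos
  refine C.forall_mem_verts.2 ?_
  simp only [ha.1, ha.2.1, apex_re, apex_im, sub_re, sub_im]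
  refine ⟨⟨?_, ?_, ?_⟩, ⟨?_, ?_, ?_⟩, ⟨?_, ?_, ?_⟩⟩ <;> linarith

lemma IsSlanted.verts_bounds_of_lt {n t j : ℕ} (hs : C.IsSlanted n t j) (hj : j < C.K) :
    ∀ v ∈ C.verts n, C.toothStart t + j * C.δ - C.h / 2 ≤ v.re ∧
      v.re ≤ C.toothStart t + (j + 1) * C.δ ∧ j * C.h ≤ v.im ∧ v.im ≤ (j + 1) * C.h := by
  have := C.δ_pos
  have := C.δ_le_h
  refine C.forall_mem_verts.2 ?_
  simp only [(hs.vertex_eq_of_lt hj).1, (hs.vertex_eq_of_lt hj).2, apex_re, apex_im, sub_re,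
    sub_im]
  refine ⟨⟨?_, ?_, ?_, ?_⟩, ⟨?_, ?_, ?_, ?_⟩, ⟨?_, ?_, ?_, ?_⟩⟩ <;> linarith

lemma IsSlanted.verts_bounds_of_ge {n t j : ℕ} (hs : C.IsSlanted n t j) (hj : C.K ≤ j) :
    ∀ v ∈ C.verts n, C.toothStart t + j * C.δ ≤ v.re ∧
      v.re ≤ C.toothStart t + (j + 1) * C.δ + C.h / 2 ∧
      (2 * C.K - (j + 1)) * C.h ≤ v.im ∧ v.im ≤ (2 * C.K - j) * C.h := by
  have := C.δ_pos
  have := C.δ_le_h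
  refine C.forall_mem_verts.2 ?_
  simp only [(hs.vertex_eq_of_ge hj).1, (hs.vertex_eq_of_ge hj).2, apex_re, apex_im, sub_re,
    sub_im]
  refine ⟨⟨?_, ?_, ?_, ?_⟩, ⟨?_, ?_, ?_, ?_⟩, ⟨?_, ?_, ?_, ?_⟩⟩ <;> linarith

lemma IsSlanted.verts_bounds {n t j : ℕ} (hs : C.IsSlanted n t j) :
    ∀ v ∈ C.verts n, C.toothStart t - C.h / 2 ≤ v.re ∧
      v.re ≤ C.toothStart t + 2 * C.K * C.δ + C.h / 2 ∧ 0 ≤ v.im ∧ v.im ≤ C.K * C.h := by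
  intro v hv
  have := C.δ_pos
  have := C.h_pos
  have hj2 : (j : ℝ) + 1 ≤ 2 * C.K := by exact_mod_cast hs.2.1
  rcases Nat.lt_or_ge j C.K with hj | hj
  · have hjK : (j : ℝ) + 1 ≤ C.K := by exact_mod_cast hj
    obtain ⟨h1, h2, h3, h4⟩ := hs.verts_bounds_of_lt hj v hv
    refine ⟨by nlinarith, by nlinarith, by nlinarith, by nlinarith⟩
  · have hjK : (C.K : ℝ) ≤ j := by exact_mod_cast hj
    obtain ⟨h1, h2, h3, h4⟩ := hs.verts_bounds_of_ge hj v hv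
    refine ⟨by nlinarith, by nlinarith, by nlinarith, by nlinarith⟩

end

lemma im_vertex_nonneg {n : ℕ} (hn : n ≤ C.N) : 0 ≤ (C.vertex n).im := by
  rcases hn.lt_or_eq with hn | rfl
  · rcases C.flat_or_slanted hn with ⟨a, ha⟩ | ⟨t, j, hs⟩
    · simp [ha.1]
    · exact (hs.verts_bounds _ (mem_insert _ _)).2.2.1
  · simp [vertex_N]

lemma re_vertex_add_δ_le {n : ℕ} (hn : n < C.N) :
    (C.vertex n).re + C.δ ≤ (C.vertex (n + 1)).re := by
  rcases C.flat_or_slanted hn with ⟨a, ha⟩ | ⟨t, j, hs⟩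
  · rw [ha.1, ha.2.1]; linarith [C.two_mul_δ_le, C.δ_pos]
  · rw [hs.vertex_eq.1, hs.vertex_eq.2]
    simp only [toothVertex, Nat.cast_add, Nat.cast_one]
    linarith

lemma re_vertex_add_mul_δ_le {l k : ℕ} (hlk : l ≤ k) (hk : k ≤ C.N) :
    (C.vertex l).re + (k - l) * C.δ ≤ (C.vertex k).re := by
  induction k, hlk using Nat.le_induction with
  | base => simp
  | succ k hlk ih =>
    have := C.re_vertex_add_δ_le (by omega : k < C.N)
    have := ih (by omega)
    push_cast
    linarith

lemma re_vertex_succ_le {n m : ℕ} (hnm : n < m) (hm : m < C.N) :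
    (C.vertex (n + 1)).re ≤ (C.vertex m).re ∧
      (n + 1 < m → (C.vertex (n + 1)).re < (C.vertex m).re) := by
  have hmono := C.re_vertex_add_mul_δ_le (by omega : n + 1 ≤ m) hm.le
  have := C.δ_pos
  push_cast at hmono
  refine ⟨by nlinarith [(by exact_mod_cast hnm : (n : ℝ) + 1 ≤ m)], fun h => ?_⟩
  nlinarith [(by exact_mod_cast h : (n : ℝ) + 1 + 1 ≤ m)]

lemma norm_vertex_succ_sub {n : ℕ} (hn : n < C.N) : ‖C.vertex (n + 1) - C.vertex n‖ = C.r := by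
  rw [Complex.norm_eq_sqrt_sq_add_sq, ← Real.sqrt_sq C.r_pos.le]
  congr 1
  rcases C.flat_or_slanted hn with ⟨a, ha⟩ | ⟨t, j, hs⟩
  · rw [ha.1, ha.2.1]; simp
  rw [← C.δ_sq_add_h_sq]
  rcases Nat.lt_or_ge j C.K with hj | hj
  · rw [(hs.vertex_eq_of_lt hj).1, (hs.vertex_eq_of_lt hj).2]
    simp only [sub_re, sub_im]; ring
  · rw [(hs.vertex_eq_of_ge hj).1, (hs.vertex_eq_of_ge hj).2]
    simp only [sub_re, sub_im]; ring

lemma vertex_ne_vertex_succ {n : ℕ} (hn : n < C.N) : C.vertex n ≠ C.vertex (n + 1) := by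
  intro h
  have := C.norm_vertex_succ_sub hn
  rw [h, sub_self, norm_zero] at this
  exact C.r_pos.ne this

def tri (n : ℕ) : Set ℂ := triangleOn (C.vertex n) (C.vertex (n + 1))

def Separated (n m : ℕ) : Prop :=
  Disjoint (C.tri n) (C.tri m) ∧ (n + 1 < m → Disjoint (closure (C.tri n)) (closure (C.tri m)))

theorem separated_of_functional {n m : ℕ} (hnm : n < m) (hm : m < C.N) {ℓ : ℂ →L[ℝ] ℝ}
    (hℓ : ℓ ≠ 0) {c c' : ℝ} (hc : c ≤ c') (hgap : n + 1 < m → c < c')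
    (h : ∀ v ∈ C.verts n, ℓ v ≤ c) (h' : ∀ v ∈ C.verts m, c' ≤ ℓ v) : C.Separated n m :=
  ⟨disjoint_triangleOn hℓ (C.vertex_ne_vertex_succ (hnm.trans hm)) (C.vertex_ne_vertex_succ hm) h
      fun v hv => hc.trans (h' v hv),
    fun hnm => disjoint_closure_triangleOn (hgap hnm) h h'⟩

lemma re_vertex_le_re_add_im {m : ℕ} (hm : m < C.N) :
    ∀ v ∈ C.verts m, (C.vertex m).re ≤ v.re + v.im := by
  have := C.im_vertex_nonneg hm.le
  have := C.im_vertex_nonneg (Nat.succ_le_of_lt hm)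
  have := C.re_vertex_add_δ_le hm
  have := C.δ_pos
  refine C.forall_mem_verts.2 ⟨by linarith, by linarith, by rw [apex_re_add_im]; linarith⟩

lemma re_sub_im_le_re_vertex {n : ℕ} (hn : n < C.N) :
    ∀ v ∈ C.verts n, v.re - v.im ≤ (C.vertex (n + 1)).re := by
  have := C.im_vertex_nonneg hn.le
  have := C.im_vertex_nonneg (Nat.succ_le_of_lt hn)
  have := C.re_vertex_add_δ_le hn
  have := C.δ_pos
  refine C.forall_mem_verts.2 ⟨by linarith, by linarith, by rw [apex_re_sub_im]; linarith⟩

section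

variable {C}

theorem IsFlat.separated_left {n m : ℕ} {a : ℝ} (ha : C.IsFlat n a) (hnm : n < m)
    (hm : m < C.N) : C.Separated n m := by
  obtain ⟨hc, hgap⟩ := C.re_vertex_succ_le hnm hm
  rw [ha.2.1] at hc hgap
  refine C.separated_of_functional hnm hm (ℓ := reCLM + imCLM) (DFunLike.ne_iff.2 ⟨1, by simp⟩)
    hc hgap (fun v hv => by simpa using (ha.verts_bounds v hv).2.2)
    (by simpa using C.re_vertex_le_re_add_im hm)

theorem IsFlat.separated_right {n m : ℕ} {a : ℝ} (ha : C.IsFlat m a) (hnm : n < m)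
    (hm : m < C.N) : C.Separated n m := by
  obtain ⟨hc, hgap⟩ := C.re_vertex_succ_le hnm hm
  rw [ha.1] at hc hgap
  refine C.separated_of_functional hnm hm (ℓ := reCLM - imCLM) (DFunLike.ne_iff.2 ⟨1, by simp⟩)
    hc hgap (by simpa using C.re_sub_im_le_re_vertex (hnm.trans hm))
    (fun v hv => by simpa using (ha.verts_bounds v hv).2.1)

theorem IsSlanted.separated_of_lt {n m t t' j j' : ℕ} (hs : C.IsSlanted n t j)
    (hs' : C.IsSlanted m t' j') (htt' : t < t') (hnm : n < m) (hm : m < C.N) :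
    C.Separated n m := by
  have hstart := C.toothStart_mono (Nat.succ_le_of_lt htt')
  rw [C.toothStart_succ] at hstart
  have := C.h_lt_r
  refine C.separated_of_functional hnm hm (ℓ := reCLM) (DFunLike.ne_iff.2 ⟨1, by simp⟩)
    (c := C.toothStart t + 2 * C.K * C.δ + C.h / 2) (c' := C.toothStart t' - C.h / 2)
    (by linarith) (fun _ => by linarith) (fun v hv => ?_) (fun v hv => ?_)
  · simpa using (hs.verts_bounds v hv).2.1
  · simpa using (hs'.verts_bounds v hv).1

theorem IsSlanted.separated_of_eq {n m t j j' : ℕ} (hs : C.IsSlanted n t j)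
    (hs' : C.IsSlanted m t j') (hnm : n < m) (hm : m < C.N) : C.Separated n m := by
  have hjj' : j < j' := by have := hs.2.2; have := hs'.2.2; omega
  have hgap : n + 1 < m → (j : ℝ) + 1 < j' := fun h => by
    have := hs.2.2; have := hs'.2.2; exact_mod_cast (by omega : j + 1 < j')
  have hjj : (j : ℝ) + 1 ≤ j' := by exact_mod_cast hjj'
  have := C.δ_pos
  have := C.h_pos
  rcases Nat.lt_or_ge j' C.K with hj' | hj'
  · -- both steps go up
    refine C.separated_of_functional hnm hm (ℓ := imCLM) (DFunLike.ne_iff.2 ⟨I, by simp⟩)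
      (c := (j + 1) * C.h) (c' := j' * C.h) (by nlinarith)
      (fun h => by nlinarith [hgap h])
      (fun v hv => by simpa using (hs.verts_bounds_of_lt (hjj'.trans hj') v hv).2.2.2)
      (fun v hv => by simpa using (hs'.verts_bounds_of_lt hj' v hv).2.2.1)
  rcases Nat.lt_or_ge j C.K with hj | hj
  · -- a step up, then a step down
    refine C.separated_of_functional hnm hm (ℓ := reCLM) (DFunLike.ne_iff.2 ⟨1, by simp⟩)
      (c := C.toothStart t + (j + 1) * C.δ) (c' := C.toothStart t + j' * C.δ) (by nlinarith)
      (fun h => by nlinarith [hgap h])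
      (fun v hv => by simpa using (hs.verts_bounds_of_lt hj v hv).2.1)
      (fun v hv => by simpa using (hs'.verts_bounds_of_ge hj' v hv).1)
  · -- both steps go down
    refine C.separated_of_functional hnm hm (ℓ := -imCLM) (DFunLike.ne_iff.2 ⟨I, by simp⟩)
      (c := -((2 * C.K - (j + 1)) * C.h)) (c' := -((2 * C.K - j') * C.h))
      (by nlinarith) (fun h => by nlinarith [hgap h])
      (fun v hv => by simpa using (hs.verts_bounds_of_ge hj v hv).2.2.1)
      (fun v hv => by simpa using (hs'.verts_bounds_of_ge (hj.trans hjj'.le) v hv).2.2.2)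

end

theorem separated {n m : ℕ} (hnm : n < m) (hm : m < C.N) : C.Separated n m := by
  rcases C.flat_or_slanted (hnm.trans hm) with ⟨a, ha⟩ | ⟨t, j, hs⟩
  · exact ha.separated_left hnm hm
  rcases C.flat_or_slanted hm with ⟨a, ha⟩ | ⟨t', j', hs'⟩
  · exact ha.separated_right hnm hm
  rcases (hs.tooth_le hs' hnm).lt_or_eq with ht | rfl
  · exact hs.separated_of_lt hs' ht hnm hm
  · exact hs.separated_of_eq hs' hnm hm

theorem tri_subset_stdTriangle {n : ℕ} (hn : n < C.N) : C.tri n ⊆ stdTriangle := by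
  refine triangleOn_subset_stdTriangle (C.vertex_ne_vertex_succ hn) ?_
  have := C.r_pos
  rcases C.flat_or_slanted hn with ⟨a, ha⟩ | ⟨t, j, hs⟩
  · intro v hv
    obtain ⟨h1, h2, h3⟩ := ha.verts_bounds v hv
    exact ⟨h1, by linarith [ha.2.2.1], by linarith [ha.2.2.2]⟩
  intro v hv
  obtain ⟨h1, h2, h3, h4⟩ := hs.verts_bounds v hv
  have hX := C.toothStart_mono (Nat.zero_le t)
  have hX' := C.toothStart_mono (Nat.succ_le_of_lt hs.1)
  have hKh : C.K * C.h ≤ C.K * C.r := mul_le_mul_of_nonneg_left C.h_lt_r.le (Nat.cast_nonneg _)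
  have := C.h_lt_r
  have := C.toothStart_K_add
  rw [C.toothStart_zero] at hX
  rw [C.toothStart_succ] at hX'
  exact ⟨h3, by linarith, by linarith⟩

def sim (n : ℕ) : EuclideanSpace ℝ (Fin 2) → EuclideanSpace ℝ (Fin 2) :=
  planeSim (C.vertex n) (C.vertex (n + 1))

theorem norm_sim_sub {n : ℕ} (hn : n < C.N) (a b : EuclideanSpace ℝ (Fin 2)) :
    ‖C.sim n a - C.sim n b‖ = C.r * ‖a - b‖ := by
  rw [sim, norm_planeSim_sub, C.norm_vertex_succ_sub hn]

theorem hausdorffMeasure_sim_image_segL {n : ℕ} (hn : n < C.N) :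
    μH[1] (C.sim n '' segL) = ENNReal.ofReal C.r := by
  rw [sim, hausdorffMeasure_planeSim_image_segL, C.norm_vertex_succ_sub hn]

theorem sim_image_triD_subset {n : ℕ} (hn : n < C.N) : C.sim n '' triD ⊆ triD := by
  rw [sim, planeSim_image_triD, ← image_preimage_eq triD toPlane.surjective,
    toPlane_preimage_triD]
  exact image_mono (C.tri_subset_stdTriangle hn)

theorem sim_image_triD_inter {n m : ℕ} (hnm : n ≠ m) (hn : n < C.N) (hm : m < C.N) :
    C.sim n '' triD ∩ C.sim m '' triD = ∅ := by
  rw [sim, sim, planeSim_image_triD, planeSim_image_triD, ← image_inter toPlane.injective,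
    image_eq_empty, ← disjoint_iff_inter_eq_empty]
  rcases hnm.lt_or_gt with h | h
  · exact (C.separated h hm).1
  · exact (C.separated h hn).1.symm

theorem closure_sim_image_triD_inter {n m : ℕ} (hnm : n + 1 < m ∨ m + 1 < n) (hn : n < C.N)
    (hm : m < C.N) : closure (C.sim n '' triD) ∩ closure (C.sim m '' triD) = ∅ := by
  rw [sim, sim, planeSim_image_triD, planeSim_image_triD, ← toPlane.coe_toHomeomorph,
    ← Homeomorph.image_closure, ← Homeomorph.image_closure,
    ← image_inter toPlane.toHomeomorph.injective, image_eq_empty, ← disjoint_iff_inter_eq_empty]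
  rcases hnm with h | h
  · exact (C.separated (by omega) hm).2 h
  · exact ((C.separated (by omega) hn).2 h).symm

end CombParams

/-! ### Choice of the parameters -/

theorem eventually_rpow_bounds {s β : ℝ} (hs : 1 / 2 < s) (hs1 : s < 1) (hβ : 0 < β) :
    ∀ᶠ x : ℝ in atTop, 9 * x < (x ^ s) ^ 2 ∧ 6 * x ^ s ≤ x ∧ 2 * x ^ (-β) ≤ 1 := by
  have h₁ := (tendsto_rpow_atTop (by linarith : 0 < 2 * s - 1)).eventually_gt_atTop 9
  have h₂ := (tendsto_rpow_atTop (by linarith : 0 < 1 - s)).eventually_ge_atTop 6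
  have h₃ := (tendsto_rpow_neg_atTop hβ).eventually (ge_mem_nhds (by norm_num : (0 : ℝ) < 1 / 2))
  filter_upwards [h₁, h₂, h₃, eventually_gt_atTop 0] with x h₁ h₂ h₃ hx
  refine ⟨?_, ?_, by linarith⟩
  · rw [← Real.rpow_natCast, ← Real.rpow_mul hx.le,
      show s * (2 : ℕ) = 1 + (2 * s - 1) by push_cast; ring, Real.rpow_add hx, Real.rpow_one]
    nlinarith
  · calc 6 * x ^ s ≤ x ^ (1 - s) * x ^ s := by gcongr
      _ = x := by rw [← Real.rpow_add hx]; simp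

theorem CombParams.exists_of_bounds {K : ℕ} {r : ℝ} (hK : 1 ≤ K) (hr : (3 * K + 1) * r < 1)
    (hr' : 1 ≤ K ^ 2 * r) : ∃ C : CombParams, C.K = K ∧ C.r = r := by
  have hK0 : (0 : ℝ) < K ^ 2 := by positivity
  have hr0 : 0 < r := pos_of_mul_pos_right (one_pos.trans_le hr') hK0.le
  set δ := (1 - (3 * K + 1) * r) / (2 * K ^ 2)
  have hδ : 0 < δ := div_pos (by linarith) (by positivity)
  have hδr : 2 * δ ≤ r := by
    rw [mul_div_assoc', div_le_iff₀ (by positivity)]; nlinarith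
  exact ⟨⟨K, r, δ, √(r ^ 2 - δ ^ 2), hK, hδ, hδr, Real.sqrt_nonneg _,
    by rw [Real.sq_sqrt (by nlinarith)]; ring, by simp only [δ]; field_simp; ring⟩, rfl, rfl⟩

theorem CombParams.exists_N_mul_rpow_eq_one {d α : ℝ} (hd1 : 1 < d) (hd2 : d < 2) (hα : α < 1) :
    ∃ C : CombParams, (C.N : ℝ) * C.r ^ d = 1 ∧ 2 * C.r ^ (1 - α) ≤ 1 := by
  have hN : Tendsto (fun K : ℕ => (((K + 1) * (2 * K + 1) : ℕ) : ℝ)) atTop atTop :=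
    tendsto_natCast_atTop_atTop.comp <| tendsto_atTop_mono (fun K => by dsimp; nlinarith) tendsto_id
  obtain ⟨K, ⟨h₁, h₂, h₃⟩, hK⟩ := ((hN.eventually (eventually_rpow_bounds (s := 1 / d)
    (β := (1 - α) / d) (by rw [div_lt_div_iff₀] <;> linarith) (by rw [div_lt_one] <;> linarith)
    (div_pos (by linarith) (by linarith)))).and (eventually_ge_atTop 1)).exists
  set x : ℝ := (((K + 1) * (2 * K + 1) : ℕ) : ℝ) with hx
  have hx0 : 0 < x := by positivity
  have hxK : x = (K + 1) * (2 * K + 1) := by rw [hx]; push_cast; ring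
  have hK1 : (1 : ℝ) ≤ K := by exact_mod_cast hK
  set r := x ^ (-1 / d)
  have hr : r = (x ^ (1 / d))⁻¹ := by rw [← Real.rpow_neg hx0.le, ← neg_div]
  have hxs := Real.rpow_pos_of_pos hx0 (1 / d)
  have hb₁ : (3 * K + 1) * r < 1 := by
    rw [hr, ← div_eq_mul_inv, div_lt_one hxs]
    nlinarith
  have hb₂ : 1 ≤ K ^ 2 * r := by
    rw [hr, ← div_eq_mul_inv, one_le_div hxs]
    nlinarith
  obtain ⟨C, hCK, hCr⟩ := CombParams.exists_of_bounds hK hb₁ hb₂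
  refine ⟨C, ?_, ?_⟩
  · rw [show C.N = (K + 1) * (2 * K + 1) by simp [CombParams.N, hCK], hCr, ← hx,
      ← Real.rpow_mul hx0.le, div_mul_cancel₀ _ (by linarith), Real.rpow_neg_one,
      mul_inv_cancel₀ hx0.ne']
  · rw [hCr, ← Real.rpow_mul hx0.le]
    convert h₃ using 3; ring

theorem exists_selfsimilar_generator_general
    (dbar α : ℝ) (hd1 : 1 < dbar) (hd2 : dbar < 2) (hα1 : α < 1) :
    ∃ (r : ℝ) (N : ℕ) (S : Fin N → EuclideanSpace ℝ (Fin 2) → EuclideanSpace ℝ (Fin 2)),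
      r ∈ Set.Ioo (0:ℝ) 1 ∧ 1 ≤ N ∧
      -- each Sᵢ is a similarity of ratio r
      (∀ i, ∀ a b : EuclideanSpace ℝ (Fin 2), ‖S i a - S i b‖ = r * ‖a - b‖) ∧
      -- (i) ℋ¹(Sᵢ(L)) = r
      (∀ i, μH[1] (S i '' segL) = ENNReal.ofReal r) ∧
      -- (ii) ⋃ᵢ Sᵢ(L) is the image of a continuous curve from (0,0) to (1,0)
      (∃ γ : ℝ → EuclideanSpace ℝ (Fin 2), ContinuousOn γ (Set.Icc 0 1) ∧
        γ 0 = 0 ∧ γ 1 = (WithLp.equiv 2 (Fin 2 → ℝ)).symm ![1, 0] ∧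
        γ '' Set.Icc 0 1 = ⋃ i, S i '' segL) ∧
      -- (iii) N·r^d̄ = 1
      (N : ℝ) * r ^ dbar = 1 ∧
      -- (iv)
      (∀ i, S i '' triD ⊆ triD) ∧
      (∀ i j, i ≠ j → S i '' triD ∩ S j '' triD = ∅) ∧
      (∀ i j : Fin N, 1 < |(i : ℤ) - (j : ℤ)| →
        closure (S i '' triD) ∩ closure (S j '' triD) = ∅) ∧
      -- (v)
      r < 1 / 2 ∧ 2 * r ^ (1 - α) ≤ 1 := by
  obtain ⟨C, hdim, hα⟩ := CombParams.exists_N_mul_rpow_eq_one hd1 hd2 hα1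
  obtain ⟨γ, hγ, hγ0, hγ1, hγL⟩ := exists_curve_image_eq_iUnion_planeSim C.vertex C.N_pos
  refine ⟨C.r, C.N, fun i => C.sim i, ⟨C.r_pos, by linarith [C.r_lt_half]⟩, C.N_pos,
    fun i => C.norm_sim_sub i.2, fun i => C.hausdorffMeasure_sim_image_segL i.2,
    ⟨γ, hγ.continuousOn, ?_, ?_, hγL⟩, hdim,
    fun i => C.sim_image_triD_subset i.2,
    fun i j hij => C.sim_image_triD_inter (Fin.val_ne_of_ne hij) i.2 j.2,
    fun i j hij => C.closure_sim_image_triD_inter ?_ i.2 j.2, C.r_lt_half, hα⟩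
  · rw [hγ0, C.vertex_zero, map_zero]
  · rw [hγ1, C.vertex_N, toPlane_one]
  · rcases lt_abs.1 hij with h | h <;> omega

/-- Lemma 4.1 of the paper: existence of a generator of a self-similar
curve of prescribed box dimension `d̄ ∈ (1,2)`. -/
theorem exists_selfsimilar_generator
    (dbar α : ℝ) (hd1 : 1 < dbar) (hd2 : dbar < 2) (hα0 : 0 < α) (hα1 : α < 1) :
    ∃ (r : ℝ) (N : ℕ) (S : Fin N → EuclideanSpace ℝ (Fin 2) → EuclideanSpace ℝ (Fin 2)),
      r ∈ Set.Ioo (0:ℝ) 1 ∧ 1 ≤ N ∧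
      -- each Sᵢ is a similarity of ratio r
      (∀ i, ∀ a b : EuclideanSpace ℝ (Fin 2), ‖S i a - S i b‖ = r * ‖a - b‖) ∧
      -- (i) ℋ¹(Sᵢ(L)) = r
      (∀ i, μH[1] (S i '' segL) = ENNReal.ofReal r) ∧
      -- (ii) ⋃ᵢ Sᵢ(L) is the image of a continuous curve from (0,0) to (1,0)
      (∃ γ : ℝ → EuclideanSpace ℝ (Fin 2), ContinuousOn γ (Set.Icc 0 1) ∧
        γ 0 = 0 ∧ γ 1 = (WithLp.equiv 2 (Fin 2 → ℝ)).symm ![1, 0] ∧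
        γ '' Set.Icc 0 1 = ⋃ i, S i '' segL) ∧
      -- (iii) N·r^d̄ = 1
      (N : ℝ) * r ^ dbar = 1 ∧
      -- (iv)
      (∀ i, S i '' triD ⊆ triD) ∧
      (∀ i j, i ≠ j → S i '' triD ∩ S j '' triD = ∅) ∧
      (∀ i j : Fin N, 1 < |(i : ℤ) - (j : ℤ)| →
        closure (S i '' triD) ∩ closure (S j '' triD) = ∅) ∧
      -- (v)
      r < 1 / 2 ∧ 2 * r ^ (1 - α) ≤ 1 :=
  exists_selfsimilar_generator_general dbar α hd1 hd2 hα1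
end
end
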